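/- arXiv:2108.06497 — 4 statements merged into one kernel-verified Lean document; each statement's English description precedes it below -/
import Mathlib

section
/- Let n be a positive integer, A an n×n real matrix, q ∈ ℝⁿ, and fix an initial point (x⁰, z₁⁰, z₂⁰) with x⁰ > 0, Ax⁰ + q > 0, z₁⁰ > 0, z₂⁰ > 0 (all inequalities componentwise). Suppose (xᵏ, z₁ᵏ, z₂ᵏ, λᵏ) is a sequence with xᵏ > 0, Axᵏ + q > 0, z₁ᵏ > 0, z₂ᵏ > 0 and λᵏ ∈ (0,1] satisfying, for every k: (i) (1−λᵏ)[(A+Aᵗ)xᵏ + q − z₁ᵏ − Aᵗz₂ᵏ] + λᵏ(xᵏ − x⁰) = 0; (ii) z₁ᵢᵏ xᵢᵏ = λᵏ z₁ᵢ⁰ xᵢ⁰ for all i; (iii) z₂ᵢᵏ (Axᵏ+q)ᵢ = λᵏ z₂ᵢ⁰ (Ax⁰+q)ᵢ for all i. If the sequences (xᵏ) and (z₂ᵏ) are bounded, then the sequence (z₁ᵏ) is also bounded; hence the whole sequence (xᵏ, z₁ᵏ, z₂ᵏ, λᵏ) is bounded. -/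
open Matrix

set_option maxHeartbeats 1000000

attribute [local instance] Matrix.normedAddCommGroup

-- auxiliary quadratic bound lemma
lemma key_bound (t l a c M : ℝ) (ht : 0 < t) (hl : 0 < l) (hl1 : l ≤ 1)
    (ha : 0 < a) (hc : 0 < c) (hM : 0 ≤ M)
    (hE : (1 - l) * t ^ 2 + l * a * t ≤ c + (1 - l) * M * t) :
    t ≤ 2 * M + 2 * c / a + 2 * Real.sqrt c := by
  by_contra h
  push_neg at h
  have hsq : Real.sqrt c * Real.sqrt c = c := Real.mul_self_sqrt hc.le
  have hsqnn : 0 ≤ Real.sqrt c := Real.sqrt_nonneg c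
  have hca : 0 < 2 * c / a := by positivity
  have htM : 2 * M < t := by linarith
  have htc : 2 * Real.sqrt c < t := by linarith
  have htca : 2 * c / a < t := by linarith
  have hat : 2 * c < t * a := (div_lt_iff₀ ha).mp htca
  have hMt : M * t ≤ t * t / 2 := by nlinarith
  have h5 : (1 - l) * (M * t) ≤ (1 - l) * (t * t / 2) :=
    mul_le_mul_of_nonneg_left hMt (by linarith)
  have h1 : (1 - l) * t ^ 2 / 2 + l * a * t ≤ c := by nlinarith [h5]
  rcases le_or_gt (1/2 : ℝ) l with hhalf | hhalf
  · nlinarith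
  · nlinarith

lemma mulVec_entry_abs_le {n : ℕ} (B : Matrix (Fin n) (Fin n) ℝ) (v : Fin n → ℝ)
    (Cv : ℝ) (hv : ‖v‖ ≤ Cv) (i : Fin n) :
    |B.mulVec v i| ≤ n * ‖B‖ * Cv := by
  have hBnn : 0 ≤ ‖B‖ := norm_nonneg _
  calc |B.mulVec v i| = |∑ j, B i j * v j| := rfl
    _ ≤ ∑ j, |B i j * v j| := Finset.abs_sum_le_sum_abs _ _
    _ ≤ ∑ _j : Fin n, ‖B‖ * Cv := by
        apply Finset.sum_le_sum
        intro j _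
        rw [abs_mul]
        have h1 : |B i j| ≤ ‖B‖ := Matrix.norm_entry_le_entrywise_sup_norm B
        have h2 : |v j| ≤ Cv := le_trans (norm_le_pi_norm v j) hv
        exact mul_le_mul h1 h2 (abs_nonneg _) hBnn
    _ = n * ‖B‖ * Cv := by rw [Finset.sum_const, Finset.card_univ, Fintype.card_fin]; ring

theorem homotopy_path_bounded (n : ℕ) (hn : 0 < n)
    (A : Matrix (Fin n) (Fin n) ℝ) (q x0 z10 z20 : Fin n → ℝ)
    (hx0 : ∀ i, 0 < x0 i) (hy0 : ∀ i, 0 < (A.mulVec x0 + q) i)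
    (hz10 : ∀ i, 0 < z10 i) (hz20 : ∀ i, 0 < z20 i)
    (x z1 z2 : ℕ → Fin n → ℝ) (lam : ℕ → ℝ)
    (hxk : ∀ k i, 0 < x k i) (hyk : ∀ k i, 0 < (A.mulVec (x k) + q) i)
    (hz1k : ∀ k i, 0 < z1 k i) (hz2k : ∀ k i, 0 < z2 k i)
    (hlamk : ∀ k, lam k ∈ Set.Ioc (0 : ℝ) 1)
    (heq1 : ∀ k, (1 - lam k) • ((A + Aᵀ).mulVec (x k) + q - z1 k - Aᵀ.mulVec (z2 k))
        + lam k • (x k - x0) = 0)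
    (heq2 : ∀ k i, z1 k i * x k i = lam k * (z10 i * x0 i))
    (heq3 : ∀ k i, z2 k i * (A.mulVec (x k) + q) i = lam k * (z20 i * (A.mulVec x0 + q) i))
    (hxbdd : ∃ C, ∀ k, ‖x k‖ ≤ C) (hz2bdd : ∃ C, ∀ k, ‖z2 k‖ ≤ C) :
    (∃ C, ∀ k, ‖z1 k‖ ≤ C) ∧
      ∃ C, ∀ k, ‖x k‖ ≤ C ∧ ‖z1 k‖ ≤ C ∧ ‖z2 k‖ ≤ C ∧ |lam k| ≤ C := by
  obtain ⟨Cx, hCx⟩ := hxbdd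
  obtain ⟨Cz, hCz⟩ := hz2bdd
  have hne : Nonempty (Fin n) := ⟨⟨0, hn⟩⟩
  have hune : (Finset.univ : Finset (Fin n)).Nonempty := Finset.univ_nonempty
  -- constants
  set M : ℝ := n * ‖A + Aᵀ‖ * Cx + ‖q‖ + n * ‖Aᵀ‖ * Cz with hMdef
  have hCxnn : (0:ℝ) ≤ Cx := le_trans (norm_nonneg _) (hCx 0)
  have hCznn : (0:ℝ) ≤ Cz := le_trans (norm_nonneg _) (hCz 0)
  have hMnn : 0 ≤ M := by positivity
  set c : ℝ := Finset.univ.sup' hune (fun i => z10 i * x0 i) with hcdef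
  have hcge : ∀ i, z10 i * x0 i ≤ c := fun i => Finset.le_sup' (fun i => z10 i * x0 i) (Finset.mem_univ i)
  have hcpos : 0 < c := by
    obtain ⟨i⟩ := hne
    exact lt_of_lt_of_le (mul_pos (hz10 i) (hx0 i)) (hcge i)
  set a : ℝ := Finset.univ.inf' hune x0 with hadef
  have hale : ∀ i, a ≤ x0 i := fun i => Finset.inf'_le _ (Finset.mem_univ i)
  have hapos : 0 < a := by
    rw [hadef, Finset.lt_inf'_iff]
    exact fun i _ => hx0 i
  set B : ℝ := 2 * M + 2 * c / a + 2 * Real.sqrt c with hBdef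
  have hBnn : 0 ≤ B := by positivity
  have hz1bdd : ∀ k, ‖z1 k‖ ≤ B := by
    intro k
    rw [pi_norm_le_iff_of_nonneg hBnn]
    intro i
    obtain ⟨hl0, hl1⟩ := hlamk k
    set l := lam k
    set t := z1 k i with htdef
    have htpos : 0 < t := hz1k k i
    -- component equation
    have hcomp : (1 - l) * ((A + Aᵀ).mulVec (x k) i + q i - t - Aᵀ.mulVec (z2 k) i)
        + l * (x k i - x0 i) = 0 := by
      have := congrFun (heq1 k) i
      simpa [Pi.add_apply, Pi.sub_apply, Pi.smul_apply, smul_eq_mul] using this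
    set b : ℝ := (A + Aᵀ).mulVec (x k) i + q i - Aᵀ.mulVec (z2 k) i with hbdef
    have hbabs : |b| ≤ M := by
      have h1 := mulVec_entry_abs_le (A + Aᵀ) (x k) Cx (hCx k) i
      have h2 := mulVec_entry_abs_le Aᵀ (z2 k) Cz (hCz k) i
      have h3 : |q i| ≤ ‖q‖ := norm_le_pi_norm q i
      rw [hMdef, hbdef]
      have := abs_sub (((A + Aᵀ).mulVec (x k) i + q i)) (Aᵀ.mulVec (z2 k) i)
      calc |(A + Aᵀ).mulVec (x k) i + q i - Aᵀ.mulVec (z2 k) i|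
          ≤ |(A + Aᵀ).mulVec (x k) i| + |q i| + |Aᵀ.mulVec (z2 k) i| := by
            have := abs_add_le ((A + Aᵀ).mulVec (x k) i) (q i)
            have := abs_sub_abs_le_abs_sub ((A + Aᵀ).mulVec (x k) i + q i) (Aᵀ.mulVec (z2 k) i)
            calc |(A + Aᵀ).mulVec (x k) i + q i - Aᵀ.mulVec (z2 k) i|
                ≤ |(A + Aᵀ).mulVec (x k) i + q i| + |Aᵀ.mulVec (z2 k) i| := abs_sub _ _
              _ ≤ |(A + Aᵀ).mulVec (x k) i| + |q i| + |Aᵀ.mulVec (z2 k) i| := by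
                  linarith [abs_add_le ((A + Aᵀ).mulVec (x k) i) (q i)]
        _ ≤ n * ‖A + Aᵀ‖ * Cx + ‖q‖ + n * ‖Aᵀ‖ * Cz := by linarith
    -- derive the quadratic relation
    have hE0 : (1 - l) * t ^ 2 + l * x0 i * t = l ^ 2 * (z10 i * x0 i) + (1 - l) * b * t := by
      have h2 := heq2 k i
      rw [hbdef]
      linear_combination (-t) * hcomp + l * h2
    have hE : (1 - l) * t ^ 2 + l * a * t ≤ c + (1 - l) * M * t := by
      have h1 : l ^ 2 * (z10 i * x0 i) ≤ c := by
        have hl2 : l ^ 2 ≤ 1 := pow_le_one₀ hl0.le hl1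
        have := mul_le_mul_of_nonneg_right hl2 (mul_pos (hz10 i) (hx0 i)).le
        have := hcge i
        linarith
      have h2 : (1 - l) * b * t ≤ (1 - l) * M * t := by
        have hb : b ≤ M := le_trans (le_abs_self b) hbabs
        have h2a : (1 - l) * b ≤ (1 - l) * M := mul_le_mul_of_nonneg_left hb (by linarith)
        exact mul_le_mul_of_nonneg_right h2a htpos.le
      have h3 : l * a * t ≤ l * x0 i * t := by
        have := mul_le_mul_of_nonneg_left (hale i) hl0.le
        exact mul_le_mul_of_nonneg_right this htpos.le
      linarith
    have := key_bound t l a c M htpos hl0 hl1 hapos hcpos hMnn hE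
    rw [Real.norm_eq_abs, abs_of_pos htpos]
    exact this
  refine ⟨⟨B, hz1bdd⟩, max (max Cx Cz) (max B 1), fun k => ?_⟩
  obtain ⟨hl0, hl1⟩ := hlamk k
  refine ⟨?_, ?_, ?_, ?_⟩
  · exact le_trans (hCx k) (le_trans (le_max_left _ _) (le_max_left _ _))
  · exact le_trans (hz1bdd k) (le_trans (le_max_left _ _) (le_max_right _ _))
  · exact le_trans (hCz k) (le_trans (le_max_right _ _) (le_max_left _ _))
  · rw [abs_of_pos hl0]
    exact le_trans hl1 (le_trans (le_max_right _ _) (le_max_right _ _))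
end

section
/- Let n be a positive integer, A an n×n real matrix, q ∈ ℝⁿ, and x̄, z̄₁, z̄₂ ∈ ℝⁿ. Set w̄ = Ax̄ + q, W̄ = diag(w̄), X̄ = diag(x̄), Δw̄ = w̄ − z̄₁ and Δx̄ = x̄ − z̄₂. Assume (A+Aᵗ)x̄ + q − z̄₁ − Aᵗz̄₂ = 0 (equivalently Δw̄ + AᵗΔx̄ = 0), z̄₁ᵢ x̄ᵢ = 0 and z̄₂ᵢ w̄ᵢ = 0 for every i, and that the matrix W̄ + X̄Aᵗ is nonsingular. Then Δx̄ = 0, and consequently x̄ᵢ w̄ᵢ = 0 for every i; in particular, if moreover x̄ ≥ 0 and w̄ ≥ 0 componentwise, then x̄ solves the linear complementarity problem LCP(q, A). -/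
open Matrix

theorem nonsingular_implies_lcp_solution (n : ℕ) (hn : 0 < n)
    (A : Matrix (Fin n) (Fin n) ℝ) (q xBar z1Bar z2Bar : Fin n → ℝ)
    (heq : (A + Aᵀ).mulVec xBar + q - z1Bar - Aᵀ.mulVec z2Bar = 0)
    (hc1 : ∀ i, z1Bar i * xBar i = 0)
    (hc2 : ∀ i, z2Bar i * (A.mulVec xBar + q) i = 0)
    (hns : IsUnit (Matrix.diagonal (A.mulVec xBar + q) + Matrix.diagonal xBar * Aᵀ).det) :
    xBar - z2Bar = 0
    ∧ (∀ i, xBar i * (A.mulVec xBar + q) i = 0)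
    ∧ ((∀ i, 0 ≤ xBar i) → (∀ i, 0 ≤ (A.mulVec xBar + q) i) →
        ((∀ i, 0 ≤ xBar i) ∧ (∀ i, 0 ≤ (A.mulVec xBar + q) i)
          ∧ ∀ i, xBar i * (A.mulVec xBar + q) i = 0)) := by
  set w : Fin n → ℝ := A.mulVec xBar + q with hw
  set M : Matrix (Fin n) (Fin n) ℝ :=
    Matrix.diagonal w + Matrix.diagonal xBar * Aᵀ with hM
  set v : Fin n → ℝ := xBar - z2Bar with hv
  -- From heq: Aᵀ (xBar - z2Bar) = -(w - z1Bar)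
  have hAv : Aᵀ.mulVec v = -(w - z1Bar) := by
    have h := heq
    rw [Matrix.add_mulVec] at h
    funext i
    have hi := congrFun h i
    simp only [Pi.add_apply, Pi.sub_apply, Pi.zero_apply, Pi.neg_apply] at hi ⊢
    rw [hv, Matrix.mulVec_sub]
    simp only [Pi.sub_apply, hw, Pi.add_apply]
    linarith
  have hMv : M.mulVec v = 0 := by
    funext i
    rw [hM, Matrix.add_mulVec, ← Matrix.mulVec_mulVec, hAv]
    simp only [Pi.add_apply, Matrix.mulVec_diagonal, Pi.neg_apply, Pi.sub_apply,
      Pi.zero_apply]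
    have h1 := hc1 i
    have h2 := hc2 i
    simp only [hv, Pi.sub_apply]
    ring_nf
    nlinarith [hc1 i, hc2 i]
  have hv0 : v = 0 := by
    have : (M⁻¹ * M).mulVec v = M⁻¹.mulVec (M.mulVec v) := by
      rw [Matrix.mulVec_mulVec]
    rw [Matrix.nonsing_inv_mul M hns, hMv, Matrix.one_mulVec, Matrix.mulVec_zero] at this
    exact this
  have hwz : w = z1Bar := by
    have : Aᵀ.mulVec v = 0 := by rw [hv0, Matrix.mulVec_zero]
    rw [this] at hAv
    exact sub_eq_zero.mp (neg_eq_zero.mp hAv.symm)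
  refine ⟨hv0, ?_, ?_⟩
  · intro i
    have := congrFun hwz i
    rw [this]
    linarith [hc1 i]
  · intro h1 h2
    exact ⟨h1, h2, fun i => by
      have := congrFun hwz i
      rw [this]; linarith [hc1 i]⟩
end

section
/- Let m be a positive integer, R₁ an invertible m×m real matrix, R₂ ∈ ℝᵐ a column vector, and set κ = R₁⁻¹R₂ ∈ ℝᵐ. Then the (m+1)×(m+1) block matrix [[R₁, R₂], [κᵗ, −1]] has determinant equal to −det(R₁)·(1 + ‖κ‖²), where ‖κ‖² = κᵗκ. In particular, if det(R₁) > 0 then this determinant is strictly negative. -/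
open Matrix

theorem det_fromBlocks_replicateCol_replicateRow {α n : Type*} [CommRing α] [Fintype n]
    [DecidableEq n] (A : Matrix n n α) (hA : IsUnit A.det) (u v : n → α) (d : Matrix Unit Unit α) :
    (fromBlocks A (replicateCol Unit u) (replicateRow Unit v) d).det
      = A.det * (d () () - v ⬝ᵥ A⁻¹ *ᵥ u) := by
  have : Invertible A := A.invertibleOfIsUnitDet hA
  rw [det_fromBlocks₁₁, invOf_eq_nonsing_inv, Matrix.mul_assoc, ← replicateCol_mulVec,
    replicateRow_mul_replicateCol, det_unique (d - _)]
  rfl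

theorem det_bordered_block_general (m : ℕ)
    (R1 : Matrix (Fin m) (Fin m) ℝ) (hR1 : IsUnit R1.det) (R2 : Fin m → ℝ) :
    (Matrix.fromBlocks R1 (Matrix.replicateCol Unit R2)
        (Matrix.replicateRow Unit (R1⁻¹.mulVec R2)) (-1 : Matrix Unit Unit ℝ)).det
      = -R1.det * (1 + ∑ i, (R1⁻¹.mulVec R2) i ^ 2)
    ∧ (0 < R1.det →
        (Matrix.fromBlocks R1 (Matrix.replicateCol Unit R2)
          (Matrix.replicateRow Unit (R1⁻¹.mulVec R2)) (-1 : Matrix Unit Unit ℝ)).det < 0) := by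
  have hdet : (fromBlocks R1 (replicateCol Unit R2) (replicateRow Unit (R1⁻¹ *ᵥ R2)) (-1)).det
      = -R1.det * (1 + ∑ i, (R1⁻¹ *ᵥ R2) i ^ 2) := by
    rw [det_fromBlocks_replicateCol_replicateRow R1 hR1, dotProduct]
    simp only [Matrix.neg_apply, one_apply_eq, sq]
    ring
  refine ⟨hdet, fun hpos => ?_⟩
  rw [hdet, neg_mul, neg_neg_iff_pos]
  positivity

theorem det_bordered_block (m : ℕ) (hm : 0 < m)
    (R1 : Matrix (Fin m) (Fin m) ℝ) (hR1 : IsUnit R1.det) (R2 : Fin m → ℝ) :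
    (Matrix.fromBlocks R1 (Matrix.replicateCol Unit R2)
        (Matrix.replicateRow Unit (R1⁻¹.mulVec R2)) (-1 : Matrix Unit Unit ℝ)).det
      = -R1.det * (1 + ∑ i, (R1⁻¹.mulVec R2) i ^ 2)
    ∧ (0 < R1.det →
        (Matrix.fromBlocks R1 (Matrix.replicateCol Unit R2)
          (Matrix.replicateRow Unit (R1⁻¹.mulVec R2)) (-1 : Matrix Unit Unit ℝ)).det < 0) :=
  det_bordered_block_general m R1 hR1 R2
end

section
/- Let n be a positive integer, A an n×n real matrix, q ∈ ℝⁿ, and x⁰, z₁⁰, z₂⁰ ∈ ℝⁿ with x⁰ > 0 and y⁰ := Ax⁰ + q > 0 componentwise. Let X⁰ = diag(x⁰), Z₁⁰ = diag(z₁⁰), Z₂⁰ = diag(z₂⁰), Y⁰ = diag(y⁰), and define the 3n×3n matrix R₁⁰ = [[I, 0, 0], [Z₁⁰, X⁰, 0], [Z₂⁰A, 0, Y⁰]] and the vector R₂⁰ ∈ ℝ³ⁿ = (−[(A+Aᵗ)x⁰ + q − z₁⁰ − Aᵗz₂⁰], −Z₁⁰x⁰, −Z₂⁰(Ax⁰+q)).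 Then R₁⁰ is invertible, and with κ = (R₁⁰)⁻¹R₂⁰, the (3n+1)×(3n+1) block matrix [[R₁⁰, R₂⁰], [κᵗ, −1]] has strictly negative determinant; indeed this determinant equals −(∏_{i=1}^{n} x⁰ᵢ y⁰ᵢ)·(1 + ‖κ‖²). -/
/- The bordered matrix `[[R₁⁰, R₂⁰], [κᵗ, -1]]` has Schur complement `-1 - κ ⬝ᵥ (R₁⁰)⁻¹R₂⁰ = -(1 + ‖κ‖²)`
with respect to `R₁⁰`, and `R₁⁰` is block lower triangular with diagonal blocks `I`, `X⁰`, `Y⁰`,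
so its determinant `∏ xᵢ⁰yᵢ⁰` is positive. -/

open Matrix

/-- The Jacobian `∂H/∂y` of the homotopy function at the initial point `(y⁰, 1)`. -/
noncomputable def homotopyR1 (n : ℕ) (A : Matrix (Fin n) (Fin n) ℝ)
    (q x0 z10 z20 : Fin n → ℝ) :
    Matrix ((Fin n ⊕ Fin n) ⊕ Fin n) ((Fin n ⊕ Fin n) ⊕ Fin n) ℝ :=
  Matrix.fromBlocks
    (Matrix.fromBlocks (1 : Matrix (Fin n) (Fin n) ℝ) 0
      (Matrix.diagonal z10) (Matrix.diagonal x0))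
    0
    (Matrix.fromCols (Matrix.diagonal z20 * A) 0)
    (Matrix.diagonal (A.mulVec x0 + q))

/-- The column `∂H/∂λ` of the homotopy function at the initial point `(y⁰, 1)`. -/
noncomputable def homotopyR2 (n : ℕ) (A : Matrix (Fin n) (Fin n) ℝ)
    (q x0 z10 z20 : Fin n → ℝ) : ((Fin n ⊕ Fin n) ⊕ Fin n) → ℝ :=
  Sum.elim
    (Sum.elim (-((A + Aᵀ).mulVec x0 + q - z10 - Aᵀ.mulVec z20))
      (fun i => -(z10 i * x0 i)))
    (fun i => -(z20 i * (A.mulVec x0 + q) i))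

theorem Matrix.det_fromBlocks_replicateCol_replicateRow {m ι R : Type*} [Fintype m]
    [DecidableEq m] [Unique ι] [CommRing R] (M : Matrix m m R) (hM : IsUnit M.det)
    (u w : m → R) (d : Matrix ι ι R) :
    (fromBlocks M (replicateCol ι u) (replicateRow ι w) d).det
      = M.det * (d default default - w ⬝ᵥ (M⁻¹ *ᵥ u)) := by
  have := M.invertibleOfIsUnitDet hM
  rw [det_fromBlocks₁₁, invOf_eq_nonsing_inv, det_unique (d - _), Matrix.mul_assoc,
    ← replicateCol_mulVec, sub_apply, replicateRow_mul_replicateCol_apply]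

theorem Matrix.det_fromBlocks_replicateCol_replicateRow_inv_mulVec {m R : Type*} [Fintype m]
    [DecidableEq m] [CommRing R] (M : Matrix m m R) (hM : IsUnit M.det) (v : m → R) :
    (fromBlocks M (replicateCol Unit v) (replicateRow Unit (M⁻¹ *ᵥ v))
        (-1 : Matrix Unit Unit R)).det
      = -M.det * (1 + ∑ j, (M⁻¹ *ᵥ v) j ^ 2) := by
  rw [det_fromBlocks_replicateCol_replicateRow M hM, neg_apply, one_apply_eq, dotProduct]
  simp only [sq]
  ring

theorem det_homotopyR1 (n : ℕ) (A : Matrix (Fin n) (Fin n) ℝ) (q x0 z10 z20 : Fin n → ℝ) :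
    (homotopyR1 n A q x0 z10 z20).det = ∏ i, x0 i * (A *ᵥ x0 + q) i := by
  rw [homotopyR1, det_fromBlocks_zero₁₂, det_fromBlocks_zero₁₂, det_one, one_mul,
    det_diagonal, det_diagonal, ← Finset.prod_mul_distrib]

theorem positive_tangent_direction_general
    (n : ℕ) (A : Matrix (Fin n) (Fin n) ℝ) (q x0 z10 z20 : Fin n → ℝ)
    (hx0 : ∀ i, 0 < x0 i) (hy0 : ∀ i, 0 < (A.mulVec x0 + q) i) :
    IsUnit (homotopyR1 n A q x0 z10 z20).det
    ∧ (Matrix.fromBlocks (homotopyR1 n A q x0 z10 z20)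
          (Matrix.replicateCol Unit (homotopyR2 n A q x0 z10 z20))
          (Matrix.replicateRow Unit
            ((homotopyR1 n A q x0 z10 z20)⁻¹.mulVec (homotopyR2 n A q x0 z10 z20)))
          (-1 : Matrix Unit Unit ℝ)).det
        = -(∏ i, x0 i * (A.mulVec x0 + q) i)
          * (1 + ∑ j, ((homotopyR1 n A q x0 z10 z20)⁻¹.mulVec
              (homotopyR2 n A q x0 z10 z20)) j ^ 2)
    ∧ (Matrix.fromBlocks (homotopyR1 n A q x0 z10 z20)
          (Matrix.replicateCol Unit (homotopyR2 n A q x0 z10 z20))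
          (Matrix.replicateRow Unit
            ((homotopyR1 n A q x0 z10 z20)⁻¹.mulVec (homotopyR2 n A q x0 z10 z20)))
          (-1 : Matrix Unit Unit ℝ)).det < 0 := by
  have hdet_pos : 0 < (homotopyR1 n A q x0 z10 z20).det := by
    rw [det_homotopyR1]
    exact Finset.prod_pos fun i _ => mul_pos (hx0 i) (hy0 i)
  have hunit : IsUnit (homotopyR1 n A q x0 z10 z20).det := hdet_pos.ne'.isUnit
  have hbordered := det_fromBlocks_replicateCol_replicateRow_inv_mulVec _ hunit
    (homotopyR2 n A q x0 z10 z20)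
  refine ⟨hunit, by rw [hbordered, det_homotopyR1], ?_⟩
  rw [hbordered]
  exact mul_neg_of_neg_of_pos (neg_neg_of_pos hdet_pos) (by positivity)

theorem positive_tangent_direction (n : ℕ) (hn : 0 < n)
    (A : Matrix (Fin n) (Fin n) ℝ) (q x0 z10 z20 : Fin n → ℝ)
    (hx0 : ∀ i, 0 < x0 i) (hy0 : ∀ i, 0 < (A.mulVec x0 + q) i) :
    IsUnit (homotopyR1 n A q x0 z10 z20).det
    ∧ (Matrix.fromBlocks (homotopyR1 n A q x0 z10 z20)
          (Matrix.replicateCol Unit (homotopyR2 n A q x0 z10 z20))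
          (Matrix.replicateRow Unit
            ((homotopyR1 n A q x0 z10 z20)⁻¹.mulVec (homotopyR2 n A q x0 z10 z20)))
          (-1 : Matrix Unit Unit ℝ)).det
        = -(∏ i, x0 i * (A.mulVec x0 + q) i)
          * (1 + ∑ j, ((homotopyR1 n A q x0 z10 z20)⁻¹.mulVec
              (homotopyR2 n A q x0 z10 z20)) j ^ 2)
    ∧ (Matrix.fromBlocks (homotopyR1 n A q x0 z10 z20)
          (Matrix.replicateCol Unit (homotopyR2 n A q x0 z10 z20))
          (Matrix.replicateRow Unit
            ((homotopyR1 n A q x0 z10 z20)⁻¹.mulVec (homotopyR2 n A q x0 z10 z20)))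
          (-1 : Matrix Unit Unit ℝ)).det < 0 :=
  positive_tangent_direction_general n A q x0 z10 z20 hx0 hy0
end
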